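/- The function G(q) = I_1(q) K_1(q) is strictly decreasing on (0, ∞). -/

import Mathlib

/-!
Write `M = -K₁' = ∫₀^∞ e^{-x cosh t} cosh² t dt`, so that `G' = I₁' K₁ - I₁ M`. Its negativity
follows from two comparisons with hyperbolic functions, `I₁' sinh < I₁ cosh` and
`K₁ cosh ≤ M sinh`.

For the first, with `aₖ`, `bₖ` the coefficients of `x^{2k+1}` in `I₁` and `sinh`, the Cauchy product
gives `I₁ cosh - I₁' sinh = ∑ 2 (j - i) aᵢ bⱼ x^{2(i+j)+1}`; pairing `(i, j)` with `(j, i)` makes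
every pair nonnegative because `aₖ / bₖ` is decreasing.

For the second, with `c = cosh t`, `2 (M sinh - K₁ cosh)` is
`∫ c (c - 1) e^{-x(c-1)} - ∫ c (c + 1) e^{-x(c+1)}`. Writing `e^{-xh} = ∫_{σ > h} x e^{-xσ} dσ`
turns `∫ c (c + s) e^{-x(c+s)}` into a superposition over `σ` of the integrals of `c (c + s)` over
`{t > 0 | c + s < σ} = (0, arcosh (σ - s))`, which are explicit and compare for each `σ`.
-/

open Real Filter Set

/-- Modified Bessel function of the first kind, order 1 (power series). -/
noncomputable def besselI1 (x : ℝ) : ℝ :=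
  ∑' k : ℕ, (x / 2) ^ (2 * k + 1) / ((Nat.factorial k : ℝ) * (Nat.factorial (k + 1) : ℝ))

/-- Modified Bessel function of the second kind, order 1 (integral representation). -/
noncomputable def besselK1 (x : ℝ) : ℝ :=
  ∫ t in Set.Ioi (0 : ℝ), Real.exp (-x * Real.cosh t) * Real.cosh t

/-- Diagonal Green's function `G(q) = I₁(q) K₁(q)`. -/
noncomputable def Gdiag (q : ℝ) : ℝ := besselI1 q * besselK1 q

/-- Green's function of the radial Helmholtz operator:
`G(r,ξ) = I₁(min(r,ξ)) K₁(max(r,ξ))`. -/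
noncomputable def Grad (r ξ : ℝ) : ℝ := besselI1 (min r ξ) * besselK1 (max r ξ)

open MeasureTheory Nat
open scoped ENNReal

noncomputable def besselI1Coeff (k : ℕ) : ℝ := 1 / (2 ^ (2 * k + 1) * (k ! * (k + 1)! : ℝ))

noncomputable def sinhCoeff (k : ℕ) : ℝ := 1 / ((2 * k + 1)! : ℝ)

noncomputable def besselI1Deriv (x : ℝ) : ℝ :=
  ∑' k : ℕ, (2 * k + 1) * besselI1Coeff k * x ^ (2 * k)

lemma besselI1Coeff_pos (k : ℕ) : 0 < besselI1Coeff k := by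
  unfold besselI1Coeff; positivity

lemma sinhCoeff_pos (k : ℕ) : 0 < sinhCoeff k := by
  unfold sinhCoeff; positivity

lemma besselI1Coeff_div_sinhCoeff_succ (k : ℕ) :
    besselI1Coeff (k + 1) / sinhCoeff (k + 1)
      = besselI1Coeff k / sinhCoeff k * ((2 * k + 3) / (2 * k + 4)) := by
  simp only [besselI1Coeff, sinhCoeff, show 2 * (k + 1) + 1 = 2 * k + 1 + 1 + 1 by ring,
    factorial_succ, pow_succ]
  push_cast
  field_simp
  ring

lemma antitone_besselI1Coeff_div_sinhCoeff :
    Antitone fun k => besselI1Coeff k / sinhCoeff k := by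
  refine antitone_nat_of_succ_le fun k => ?_
  rw [besselI1Coeff_div_sinhCoeff_succ]
  have := (besselI1Coeff_pos k).le
  refine mul_le_of_le_one_right (div_nonneg this (sinhCoeff_pos k).le) ?_
  rw [div_le_one (by positivity)]
  linarith

lemma besselI1Coeff_mul_sinhCoeff_le {i j : ℕ} (hij : i ≤ j) :
    besselI1Coeff j * sinhCoeff i ≤ besselI1Coeff i * sinhCoeff j := by
  have := antitone_besselI1Coeff_div_sinhCoeff hij
  rwa [div_le_div_iff₀ (sinhCoeff_pos j) (sinhCoeff_pos i)] at this

lemma besselI1Coeff_le_sinhCoeff (k : ℕ) : besselI1Coeff k ≤ sinhCoeff k := by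
  have h := besselI1Coeff_mul_sinhCoeff_le (Nat.zero_le k)
  rw [show besselI1Coeff 0 = 1 / 2 by norm_num [besselI1Coeff],
    show sinhCoeff 0 = 1 by norm_num [sinhCoeff]] at h
  linarith [(sinhCoeff_pos k).le]

lemma besselI1_eq_tsum (x : ℝ) : besselI1 x = ∑' k, besselI1Coeff k * x ^ (2 * k + 1) := by
  unfold besselI1 besselI1Coeff
  congr 1; ext k
  rw [div_pow]; field_simp

lemma hasSum_sinh_sinhCoeff (x : ℝ) :
    HasSum (fun k => sinhCoeff k * x ^ (2 * k + 1)) (sinh x) := by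
  convert Real.hasSum_sinh x using 2 with k
  rw [sinhCoeff, one_div_mul_eq_div]

lemma hasSum_cosh_sinhCoeff (x : ℝ) :
    HasSum (fun k => (2 * k + 1) * sinhCoeff k * x ^ (2 * k)) (cosh x) := by
  convert Real.hasSum_cosh x using 2 with k
  rw [sinhCoeff, factorial_succ]
  push_cast
  field_simp

lemma summable_norm_sinh_term (x : ℝ) : Summable fun k => ‖sinhCoeff k * x ^ (2 * k + 1)‖ := by
  refine (hasSum_sinh_sinhCoeff |x|).summable.congr fun k => ?_
  rw [norm_mul, norm_pow, Real.norm_of_nonneg (sinhCoeff_pos k).le, Real.norm_eq_abs]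

lemma summable_norm_cosh_term (x : ℝ) :
    Summable fun k => ‖(2 * k + 1) * sinhCoeff k * x ^ (2 * k)‖ := by
  refine (hasSum_cosh_sinhCoeff |x|).summable.congr fun k => ?_
  rw [norm_mul, norm_pow, Real.norm_of_nonneg (by have := sinhCoeff_pos k; positivity),
    Real.norm_eq_abs]

lemma summable_norm_besselI1_term (x : ℝ) :
    Summable fun k => ‖besselI1Coeff k * x ^ (2 * k + 1)‖ := by
  refine (hasSum_sinh_sinhCoeff |x|).summable.of_nonneg_of_le (fun _ => norm_nonneg _) fun k => ?_
  rw [norm_mul, norm_pow, Real.norm_of_nonneg (besselI1Coeff_pos k).le, Real.norm_eq_abs]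
  gcongr
  exact besselI1Coeff_le_sinhCoeff k

lemma summable_norm_besselI1Deriv_term (x : ℝ) :
    Summable fun k => ‖(2 * k + 1) * besselI1Coeff k * x ^ (2 * k)‖ := by
  refine (hasSum_cosh_sinhCoeff |x|).summable.of_nonneg_of_le (fun _ => norm_nonneg _) fun k => ?_
  rw [norm_mul, norm_pow, norm_mul, Real.norm_of_nonneg (besselI1Coeff_pos k).le,
    Real.norm_of_nonneg (by positivity), Real.norm_eq_abs]
  gcongr
  exact besselI1Coeff_le_sinhCoeff k

lemma hasSum_besselI1 (x : ℝ) :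
    HasSum (fun k => besselI1Coeff k * x ^ (2 * k + 1)) (besselI1 x) := by
  rw [besselI1_eq_tsum]
  exact (summable_norm_besselI1_term x).of_norm.hasSum

lemma hasSum_besselI1Deriv (x : ℝ) :
    HasSum (fun k => (2 * k + 1) * besselI1Coeff k * x ^ (2 * k)) (besselI1Deriv x) := by
  have h := (summable_norm_besselI1Deriv_term x).of_norm.hasSum
  rwa [← besselI1Deriv] at h

lemma hasDerivAt_besselI1 (x : ℝ) : HasDerivAt besselI1 (besselI1Deriv x) x := by
  have hx : x ∈ Ioo (-(|x| + 1)) (|x| + 1) := by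
    constructor <;> cases abs_cases x <;> linarith
  have hderiv := hasDerivAt_tsum_of_isPreconnected
    (g := fun k z => besselI1Coeff k * z ^ (2 * k + 1))
    (g' := fun k z => (2 * k + 1) * besselI1Coeff k * z ^ (2 * k))
    (summable_norm_besselI1Deriv_term (|x| + 1)).of_norm
    isOpen_Ioo isPreconnected_Ioo (fun k y _ => ?_) (fun k y hy => ?_) hx
    (summable_norm_besselI1_term x).of_norm hx
  · rwa [show besselI1 = fun z => ∑' k, besselI1Coeff k * z ^ (2 * k + 1) from
      funext besselI1_eq_tsum]
  · refine ((hasDerivAt_pow (2 * k + 1) y).const_mul (besselI1Coeff k)).congr_deriv ?_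
    rw [Nat.add_sub_cancel]; push_cast; ring
  · have hk := besselI1Coeff_pos k
    rw [norm_mul, norm_mul, norm_pow, Real.norm_of_nonneg (by positivity),
      Real.norm_of_nonneg hk.le, Real.norm_eq_abs]
    gcongr
    exact abs_le.2 ⟨hy.1.le, hy.2.le⟩

lemma besselI1_pos {x : ℝ} (hx : 0 < x) : 0 < besselI1 x := by
  rw [besselI1_eq_tsum]
  exact (summable_norm_besselI1_term x).of_norm.tsum_pos
    (fun k => by have := besselI1Coeff_pos k; positivity) 0
    (by have := besselI1Coeff_pos 0; positivity)

lemma tsum_pos_of_add_swap_nonneg {α : Type*} {F : α × α → ℝ} (hF : Summable F)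
    (hswap : ∀ p : α × α, 0 ≤ F p + F p.swap) (q : α × α) (hq : 0 < F q + F q.swap) :
    0 < ∑' p, F p := by
  have hFswap : Summable fun p : α × α => F p.swap := (Equiv.prodComm α α).summable_iff.2 hF
  have htwo : 2 * ∑' p, F p = ∑' p, (F p + F p.swap) := by
    have : ∑' p : α × α, F p.swap = ∑' p, F p := (Equiv.prodComm α α).tsum_eq F
    rw [hF.tsum_add hFswap, this]; ring
  linarith [(hF.add hFswap).tsum_pos hswap q hq]

lemma besselI1Deriv_mul_sinh_lt {x : ℝ} (hx : 0 < x) :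
    besselI1Deriv x * sinh x < besselI1 x * cosh x := by
  set F : ℕ × ℕ → ℝ := fun p => besselI1Coeff p.1 * x ^ (2 * p.1 + 1) *
      ((2 * p.2 + 1) * sinhCoeff p.2 * x ^ (2 * p.2)) - (2 * p.1 + 1) * besselI1Coeff p.1 *
        x ^ (2 * p.1) * (sinhCoeff p.2 * x ^ (2 * p.2 + 1))
  have hF : HasSum F (besselI1 x * cosh x - besselI1Deriv x * sinh x) := by
    have h₁ := summable_mul_of_summable_norm (summable_norm_besselI1_term x)
      (summable_norm_cosh_term x)
    have h₂ := summable_mul_of_summable_norm (summable_norm_besselI1Deriv_term x)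
      (summable_norm_sinh_term x)
    exact ((hasSum_besselI1 x).mul (hasSum_cosh_sinhCoeff x) h₁).sub
      ((hasSum_besselI1Deriv x).mul (hasSum_sinh_sinhCoeff x) h₂)
  have hFswap (i j : ℕ) : F (i, j) + F (j, i) = 2 * ((j : ℝ) - i) *
      (besselI1Coeff i * sinhCoeff j - besselI1Coeff j * sinhCoeff i) * x ^ (2 * (i + j) + 1) := by
    simp only [F]; ring
  suffices 0 < ∑' p, F p by linarith [hF.tsum_eq]
  refine tsum_pos_of_add_swap_nonneg hF.summable (fun ⟨i, j⟩ => ?_) (0, 1) ?_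
  · rw [Prod.swap_prod_mk, hFswap]
    refine mul_nonneg ?_ (by positivity)
    rcases le_total i j with hij | hji
    · have := besselI1Coeff_mul_sinhCoeff_le hij
      have : (i : ℝ) ≤ j := by exact_mod_cast hij
      refine mul_nonneg ?_ ?_ <;> linarith
    · have := besselI1Coeff_mul_sinhCoeff_le hji
      have : (j : ℝ) ≤ i := by exact_mod_cast hji
      refine mul_nonneg_of_nonpos_of_nonpos ?_ ?_ <;> linarith
  · rw [Prod.swap_prod_mk, hFswap]
    norm_num [besselI1Coeff, sinhCoeff]
    positivity

noncomputable def besselK1NegDeriv (x : ℝ) : ℝ :=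
  ∫ t in Ioi (0 : ℝ), exp (-x * cosh t) * cosh t ^ 2

lemma exp_neg_mul_cosh_mul_cosh_pow_le {a t : ℝ} (ha : 0 < a) (ht : 0 ≤ t) (n : ℕ) :
    exp (-a * cosh t) * cosh t ^ n ≤ n ! * (2 / a) ^ n * exp (-(a / 2) * t) := by
  have hc : t ≤ cosh t := ((self_le_sinh_iff).2 ht).trans (sinh_lt_cosh t).le
  have hpow : cosh t ^ n ≤ n ! * (2 / a) ^ n * exp (a / 2 * cosh t) := by
    have h := pow_div_factorial_le_exp (a / 2 * cosh t) (by positivity) n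
    rw [div_le_iff₀ (by positivity), mul_pow] at h
    calc cosh t ^ n = (2 / a) ^ n * ((a / 2) ^ n * cosh t ^ n) := by
          rw [← mul_assoc, ← mul_pow, show 2 / a * (a / 2) = 1 by field_simp, one_pow, one_mul]
      _ ≤ (2 / a) ^ n * (exp (a / 2 * cosh t) * n !) := by gcongr
      _ = _ := by ring
  calc exp (-a * cosh t) * cosh t ^ n
      ≤ exp (-a * cosh t) * (n ! * (2 / a) ^ n * exp (a / 2 * cosh t)) := by gcongr
    _ = n ! * (2 / a) ^ n * exp (-(a / 2) * cosh t) := by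
        rw [mul_comm, mul_assoc, ← exp_add]; ring_nf
    _ ≤ n ! * (2 / a) ^ n * exp (-(a / 2) * t) := by
        gcongr ?_ * exp ?_
        nlinarith

lemma integrableOn_exp_neg_mul_cosh_mul_cosh_pow {a : ℝ} (ha : 0 < a) (n : ℕ) :
    IntegrableOn (fun t => exp (-a * cosh t) * cosh t ^ n) (Ioi 0) := by
  refine Integrable.mono'
    ((exp_neg_integrableOn_Ioi 0 (half_pos ha)).const_mul (n ! * (2 / a) ^ n)) (by fun_prop) ?_
  filter_upwards [ae_restrict_mem measurableSet_Ioi] with t ht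
  rw [Real.norm_of_nonneg (by positivity)]
  exact exp_neg_mul_cosh_mul_cosh_pow_le ha (le_of_lt ht) n

lemma integrableOn_exp_neg_mul_cosh_mul_cosh {a : ℝ} (ha : 0 < a) :
    IntegrableOn (fun t => exp (-a * cosh t) * cosh t) (Ioi 0) := by
  simpa using integrableOn_exp_neg_mul_cosh_mul_cosh_pow ha 1

lemma hasDerivAt_besselK1 {x : ℝ} (hx : 0 < x) :
    HasDerivAt besselK1 (-besselK1NegDeriv x) x := by
  have hmain := hasDerivAt_integral_of_dominated_loc_of_deriv_le
    (F := fun x' t => exp (-x' * cosh t) * cosh t)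
    (F' := fun x' t => -(exp (-x' * cosh t) * cosh t ^ 2))
    (bound := fun t => exp (-(x / 2) * cosh t) * cosh t ^ 2)
    (μ := volume.restrict (Ioi 0)) (Metric.ball_mem_nhds x (half_pos hx))
    (Eventually.of_forall fun _ => by fun_prop) (integrableOn_exp_neg_mul_cosh_mul_cosh hx)
    (by fun_prop) ?_ (integrableOn_exp_neg_mul_cosh_mul_cosh_pow (half_pos hx) 2) ?_
  · rw [besselK1NegDeriv, ← integral_neg]
    exact hmain.2
  · refine Eventually.of_forall fun t x' hx' => ?_
    rw [Metric.mem_ball, Real.dist_eq, abs_lt] at hx'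
    rw [norm_neg, Real.norm_of_nonneg (by positivity)]
    gcongr
    nlinarith [cosh_pos t]
  · refine Eventually.of_forall fun t x' _ => ?_
    refine (((hasDerivAt_neg x').mul_const (cosh t)).exp.mul_const (cosh t)).congr_deriv ?_
    ring

lemma besselK1_pos {x : ℝ} (hx : 0 < x) : 0 < besselK1 x := by
  rw [besselK1, setIntegral_pos_iff_support_of_nonneg_ae
    (Eventually.of_forall fun t => by positivity) (integrableOn_exp_neg_mul_cosh_mul_cosh hx)]
  have : Function.support (fun t => exp (-x * cosh t) * cosh t) = univ :=
    Function.support_eq_univ fun t => by positivity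
  rw [this, univ_inter, Real.volume_Ioi]
  exact ENNReal.zero_lt_top

lemma ofReal_exp_neg_mul_eq_lintegral_Ioi {x : ℝ} (hx : 0 < x) (a : ℝ) :
    ENNReal.ofReal (exp (-x * a)) = ∫⁻ σ in Ioi a, ENNReal.ofReal (x * exp (-x * σ)) := by
  rw [← ofReal_integral_eq_lintegral_ofReal
    ((integrableOn_exp_mul_Ioi (neg_neg_of_pos hx) a).const_mul x)
    (Eventually.of_forall fun σ => by positivity), integral_const_mul,
    integral_exp_mul_Ioi (neg_neg_of_pos hx)]
  field_simp

lemma lintegral_mul_exp_neg_mul_eq_lintegral_sublevel {α : Type*} [MeasurableSpace α]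
    (μ : Measure α) [SFinite μ] {x : ℝ} (hx : 0 < x) {g : α → ℝ≥0∞} {h : α → ℝ}
    (hg : Measurable g) (hh : Measurable h) :
    ∫⁻ t, g t * ENNReal.ofReal (exp (-x * h t)) ∂μ
      = ∫⁻ σ, (∫⁻ t in {t | h t < σ}, g t ∂μ) * ENNReal.ofReal (x * exp (-x * σ)) := by
  have hexp : Measurable fun σ : ℝ => ENNReal.ofReal (x * exp (-x * σ)) := by fun_prop
  set F : α × ℝ → ℝ≥0∞ :=
    {p | h p.1 < p.2}.indicator fun p => g p.1 * ENNReal.ofReal (x * exp (-x * p.2))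
  have hF : Measurable F := Measurable.indicator (by fun_prop)
    (measurableSet_lt (hh.comp measurable_fst) measurable_snd)
  calc ∫⁻ t, g t * ENNReal.ofReal (exp (-x * h t)) ∂μ
      = ∫⁻ t, (∫⁻ σ, F (t, σ)) ∂μ := lintegral_congr fun t => by
        rw [ofReal_exp_neg_mul_eq_lintegral_Ioi hx, ← lintegral_const_mul _ hexp,
          ← lintegral_indicator measurableSet_Ioi]
        rfl
    _ = ∫⁻ σ, ∫⁻ t, F (t, σ) ∂μ :=
        lintegral_lintegral_swap (f := fun t σ => F (t, σ)) hF.aemeasurable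
    _ = _ := lintegral_congr fun σ => by
        rw [← lintegral_mul_const _ hg,
          ← lintegral_indicator (measurableSet_lt hh measurable_const)]
        rfl

lemma cosh_mul_cosh_add_nonneg {s : ℝ} (hs : -1 ≤ s) (t : ℝ) : 0 ≤ cosh t * (cosh t + s) :=
  mul_nonneg (cosh_pos t).le (by linarith [one_le_cosh t])

noncomputable def coshSublevelIntegral (s w : ℝ) : ℝ :=
  arcosh w / 2 + w * √(w ^ 2 - 1) / 2 + s * √(w ^ 2 - 1)

lemma integral_cosh_mul_cosh_add (s T : ℝ) :
    ∫ t in (0)..T, cosh t * (cosh t + s) = T / 2 + sinh T * cosh T / 2 + s * sinh T := by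
  have hderiv (t : ℝ) : HasDerivAt (fun T => T / 2 + sinh T * cosh T / 2 + s * sinh T)
      (cosh t * (cosh t + s)) t := by
    refine (((hasDerivAt_id t).div_const 2).add (((hasDerivAt_sinh t).mul
      (hasDerivAt_cosh t)).div_const 2) |>.add ((hasDerivAt_sinh t).const_mul s)).congr_deriv ?_
    linear_combination (-1 / 2) * cosh_sq t
  rw [intervalIntegral.integral_eq_sub_of_hasDerivAt (fun t _ => hderiv t)
    ((by fun_prop : Continuous fun t => cosh t * (cosh t + s)).intervalIntegrable _ _)]
  simp

lemma setOf_cosh_lt_inter_Ioi {w : ℝ} (hw : 1 ≤ w) :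
    {t | cosh t < w} ∩ Ioi 0 = Ioo 0 (arcosh w) := by
  ext t
  simp only [mem_inter_iff, mem_ofPred_eq, mem_Ioi, mem_Ioo]
  constructor
  · rintro ⟨h, ht⟩
    rw [← cosh_arcosh hw, cosh_lt_cosh, abs_of_pos ht, abs_of_nonneg (arcosh_nonneg hw)] at h
    exact ⟨ht, h⟩
  · rintro ⟨ht, h⟩
    rw [← cosh_arcosh hw, cosh_lt_cosh, abs_of_pos ht, abs_of_nonneg (arcosh_nonneg hw)]
    exact ⟨h, ht⟩

lemma setLIntegral_cosh_mul_cosh_add_sublevel {s σ : ℝ} (hs : -1 ≤ s) (hσ : 1 ≤ σ - s) :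
    ∫⁻ t in {t | cosh t + s < σ}, ENNReal.ofReal (cosh t * (cosh t + s)) ∂volume.restrict (Ioi 0)
      = ENNReal.ofReal (coshSublevelIntegral s (σ - s)) := by
  have hset : {t | cosh t + s < σ} = {t | cosh t < σ - s} := by
    ext t; simp only [mem_ofPred_eq, lt_sub_iff_add_lt]
  rw [Measure.restrict_restrict (measurableSet_lt (by fun_prop) measurable_const), hset,
    setOf_cosh_lt_inter_Ioi hσ, ← ofReal_integral_eq_lintegral_ofReal,
    ← integral_Ioc_eq_integral_Ioo, ← intervalIntegral.integral_of_le (arcosh_nonneg hσ),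
    integral_cosh_mul_cosh_add, sinh_arcosh hσ, cosh_arcosh hσ, coshSublevelIntegral]
  · ring_nf
  · exact (by fun_prop : Continuous fun t => cosh t * (cosh t + s)).integrableOn_Icc.mono_set
      Ioo_subset_Icc_self
  · exact Eventually.of_forall (cosh_mul_cosh_add_nonneg hs)

lemma coshSublevelIntegral_le {w : ℝ} (hw : 1 ≤ w) :
    coshSublevelIntegral 1 w ≤ coshSublevelIntegral (-1) (w + 2) := by
  have harcosh : arcosh w ≤ arcosh (w + 2) :=
    (arcosh_le_arcosh (by linarith) (by linarith)).2 (by linarith)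
  have hsqrt : √(w ^ 2 - 1) * (w + 2) ≤ √((w + 2) ^ 2 - 1) * w := by
    have hq := sq_sqrt (by nlinarith : 0 ≤ w ^ 2 - 1)
    have hp := sq_sqrt (by nlinarith : 0 ≤ (w + 2) ^ 2 - 1)
    rw [← pow_le_pow_iff_left₀ (by positivity) (by positivity) two_ne_zero, mul_pow, mul_pow,
      hq, hp]
    nlinarith
  unfold coshSublevelIntegral
  linarith

lemma cosh_mul_cosh_add_mul_exp_eq (x s : ℝ) :
    (fun t => cosh t * (cosh t + s) * exp (-x * (cosh t + s)))
      = fun t => exp (-x * s) *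
          (exp (-x * cosh t) * cosh t ^ 2 + s * (exp (-x * cosh t) * cosh t)) := by
  funext t
  rw [mul_add (-x), exp_add]
  ring

lemma integrableOn_cosh_mul_cosh_add_mul_exp {x : ℝ} (hx : 0 < x) (s : ℝ) :
    IntegrableOn (fun t => cosh t * (cosh t + s) * exp (-x * (cosh t + s))) (Ioi 0) := by
  rw [cosh_mul_cosh_add_mul_exp_eq]
  exact ((integrableOn_exp_neg_mul_cosh_mul_cosh_pow hx 2).add
    ((integrableOn_exp_neg_mul_cosh_mul_cosh hx).const_mul s)).const_mul _

lemma integral_cosh_mul_cosh_add_mul_exp {x : ℝ} (hx : 0 < x) (s : ℝ) :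
    ∫ t in Ioi 0, cosh t * (cosh t + s) * exp (-x * (cosh t + s))
      = exp (-x * s) * (besselK1NegDeriv x + s * besselK1 x) := by
  rw [cosh_mul_cosh_add_mul_exp_eq, integral_const_mul,
    integral_add (integrableOn_exp_neg_mul_cosh_mul_cosh_pow hx 2)
      ((integrableOn_exp_neg_mul_cosh_mul_cosh hx).const_mul s), integral_const_mul,
    besselK1NegDeriv, besselK1]

lemma lintegral_cosh_mul_cosh_add_mul_exp {x s : ℝ} (hx : 0 < x) (hs : -1 ≤ s) :
    ∫⁻ t in Ioi 0, ENNReal.ofReal (cosh t * (cosh t + s) * exp (-x * (cosh t + s)))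
      = ∫⁻ σ, (∫⁻ t in {t | cosh t + s < σ}, ENNReal.ofReal (cosh t * (cosh t + s))
          ∂volume.restrict (Ioi 0)) * ENNReal.ofReal (x * exp (-x * σ)) := by
  rw [← lintegral_mul_exp_neg_mul_eq_lintegral_sublevel _ hx (by fun_prop) (by fun_prop)]
  exact lintegral_congr fun t => ENNReal.ofReal_mul (cosh_mul_cosh_add_nonneg hs t)

lemma integral_cosh_mul_cosh_add_one_mul_exp_le {x : ℝ} (hx : 0 < x) :
    ∫ t in Ioi 0, cosh t * (cosh t + 1) * exp (-x * (cosh t + 1))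
      ≤ ∫ t in Ioi 0, cosh t * (cosh t + -1) * exp (-x * (cosh t + -1)) := by
  have hnonneg {s : ℝ} (hs : -1 ≤ s) :
      0 ≤ᵐ[volume.restrict (Ioi 0)] fun t => cosh t * (cosh t + s) * exp (-x * (cosh t + s)) :=
    Eventually.of_forall fun t => mul_nonneg (cosh_mul_cosh_add_nonneg hs t) (exp_pos _).le
  rw [← ENNReal.ofReal_le_ofReal_iff (integral_nonneg_of_ae (hnonneg le_rfl)),
    ofReal_integral_eq_lintegral_ofReal (integrableOn_cosh_mul_cosh_add_mul_exp hx 1)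
      (hnonneg (by norm_num)),
    ofReal_integral_eq_lintegral_ofReal (integrableOn_cosh_mul_cosh_add_mul_exp hx (-1))
      (hnonneg le_rfl),
    lintegral_cosh_mul_cosh_add_mul_exp hx (by norm_num),
    lintegral_cosh_mul_cosh_add_mul_exp hx le_rfl]
  refine lintegral_mono fun σ => ?_
  gcongr ?_ * _
  rcases lt_or_ge (σ - 1) 1 with hσ | hσ
  · have hempty : {t : ℝ | cosh t + 1 < σ} = ∅ :=
      eq_empty_of_forall_notMem fun t ht => by
        have := one_le_cosh t
        rw [mem_ofPred_eq] at ht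
        linarith
    simp [hempty]
  · rw [setLIntegral_cosh_mul_cosh_add_sublevel (by norm_num) hσ,
      setLIntegral_cosh_mul_cosh_add_sublevel le_rfl (by linarith),
      show σ - -1 = σ - 1 + 2 by ring]
    exact ENNReal.ofReal_le_ofReal (coshSublevelIntegral_le hσ)

lemma besselK1_mul_cosh_le {x : ℝ} (hx : 0 < x) :
    besselK1 x * cosh x ≤ besselK1NegDeriv x * sinh x := by
  have h := integral_cosh_mul_cosh_add_one_mul_exp_le hx
  rw [integral_cosh_mul_cosh_add_mul_exp hx, integral_cosh_mul_cosh_add_mul_exp hx, mul_one,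
    mul_neg_one, neg_neg] at h
  rw [cosh_eq, sinh_eq]
  linear_combination h / 2

lemma besselI1Deriv_mul_besselK1_lt {x : ℝ} (hx : 0 < x) :
    besselI1Deriv x * besselK1 x < besselI1 x * besselK1NegDeriv x := by
  refine lt_of_mul_lt_mul_right ?_ (sinh_pos_iff.2 hx).le
  calc besselI1Deriv x * besselK1 x * sinh x
      = besselI1Deriv x * sinh x * besselK1 x := by ring
    _ < besselI1 x * cosh x * besselK1 x :=
        mul_lt_mul_of_pos_right (besselI1Deriv_mul_sinh_lt hx) (besselK1_pos hx)
    _ = besselI1 x * (besselK1 x * cosh x) := by ring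
    _ ≤ besselI1 x * (besselK1NegDeriv x * sinh x) :=
        mul_le_mul_of_nonneg_left (besselK1_mul_cosh_le hx) (besselI1_pos hx).le
    _ = besselI1 x * besselK1NegDeriv x * sinh x := by ring

lemma hasDerivAt_Gdiag {x : ℝ} (hx : 0 < x) :
    HasDerivAt Gdiag (besselI1Deriv x * besselK1 x - besselI1 x * besselK1NegDeriv x) x := by
  refine ((hasDerivAt_besselI1 x).mul (hasDerivAt_besselK1 hx)).congr_deriv ?_
  ring

/-- G(q) = I₁(q)K₁(q) is strictly decreasing on (0,∞). -/
theorem Gdiag_strictAntiOn : StrictAntiOn Gdiag (Set.Ioi 0) := by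
  refine strictAntiOn_of_deriv_neg (convex_Ioi 0)
    (fun x hx => (hasDerivAt_Gdiag hx).continuousAt.continuousWithinAt) fun x hx => ?_
  rw [interior_Ioi] at hx
  rw [(hasDerivAt_Gdiag hx).deriv, sub_neg]
  exact besselI1Deriv_mul_besselK1_lt hx
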